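/- arXiv:math/9703217 — 4 statements merged into one kernel-verified Lean document; each statement's English description precedes it below -/
import Mathlib

section
/- The parameter derivative of the Laguerre polynomial is ∂/∂α L_n^{(α)}(x) = ∑_{m=0}^{n−1} L_m^{(α)}(x)/(n−m). -/
open Finset

/-- Generalized binomial coefficient `binom(α, k) = (α)(α−1)⋯(α−k+1)/k!`. -/
noncomputable def genBinom (α : ℝ) (k : ℕ) : ℝ :=
  (∏ j ∈ Finset.range k, (α - j)) / (Nat.factorial k)

/-- Generalized Laguerre polynomial value
`L_n^{(α)}(x) = ∑_{k=0}^n (−1)^k binom(n+α, n−k) x^k / k!`. -/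
noncomputable def laguerre (n : ℕ) (α x : ℝ) : ℝ :=
  ∑ k ∈ Finset.range (n + 1),
    (-1 : ℝ) ^ k * genBinom (n + α) (n - k) * x ^ k / (Nat.factorial k)

/-!
The coefficient `B_r = binom(r + b, r) = ∏_{j=1}^r (b + j)/j` satisfies
`(r + 1) B_{r+1} = (b + r + 1) B_r`, so by the product rule and induction on `r` its
`b`-derivative is `∑_{s<r} B_s/(r - s)`: the induction step is the identity
`(b + r + 1) B_s = (s + 1) B_{s+1} + (r - s) B_s` summed over `s < r`.
Substituting `r = n - k`, `b = α + k` and `m = k + s`, the coefficient `binom(n + α, n - k)` of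
`L_n^{(α)}` has derivative `∑_{k ≤ m < n} binom(m + α, m - k)/(n - m)`, and exchanging the sums
over `k` and `m` collects these into `∑_{m<n} L_m^{(α)}(x)/(n - m)`.
-/

lemma genBinom_nat_add_succ (r : ℕ) (b : ℝ) :
    genBinom (((r + 1 : ℕ) : ℝ) + b) (r + 1) = (b + r + 1) / (r + 1) * genBinom (r + b) r := by
  unfold genBinom
  rw [prod_range_succ', Nat.factorial_succ]
  have hprod : ∏ j ∈ range r, (((r + 1 : ℕ) : ℝ) + b - ((j + 1 : ℕ) : ℝ))
      = ∏ j ∈ range r, ((r : ℝ) + b - j) :=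
    prod_congr rfl fun j _ => by push_cast; ring
  rw [hprod]
  push_cast
  field_simp
  ring

lemma sum_div_sub_succ_of_recurrence {B : ℕ → ℝ} {b : ℝ}
    (hB : ∀ s : ℕ, ((s : ℝ) + 1) * B (s + 1) = (b + s + 1) * B s) (r : ℕ) :
    ∑ s ∈ range (r + 1), B s / (((r + 1 : ℕ) : ℝ) - s)
      = (B r + (b + r + 1) * ∑ s ∈ range r, B s / ((r : ℝ) - s)) / (r + 1) := by
  have hsplit_r : ∀ s ∈ range r,
      (b + r + 1) * (B s / ((r : ℝ) - s)) = (s + 1) * B (s + 1) / ((r : ℝ) - s) + B s := by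
    intro s hs
    have : (r : ℝ) - s ≠ 0 := sub_ne_zero.mpr (by exact_mod_cast (mem_range.mp hs).ne')
    rw [hB]
    field_simp
    ring
  have hsplit_succ : ∀ s ∈ range (r + 1),
      ((r : ℝ) + 1) * (B s / (((r + 1 : ℕ) : ℝ) - s))
        = s * B s / (((r + 1 : ℕ) : ℝ) - s) + B s := by
    intro s hs
    have : ((r + 1 : ℕ) : ℝ) - s ≠ 0 := sub_ne_zero.mpr (by exact_mod_cast (mem_range.mp hs).ne')
    field_simp
    push_cast
    ring
  have hshift : ∑ s ∈ range (r + 1), s * B s / (((r + 1 : ℕ) : ℝ) - s)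
      = ∑ s ∈ range r, (s + 1) * B (s + 1) / ((r : ℝ) - s) := by
    rw [sum_range_succ']
    push_cast
    simp only [zero_mul, zero_div, add_zero, add_sub_add_right_eq_sub]
  rw [eq_div_iff (by positivity), mul_comm, mul_sum, sum_congr rfl hsplit_succ, sum_add_distrib,
    hshift, mul_sum, sum_congr rfl hsplit_r, sum_add_distrib, sum_range_succ]
  ring

lemma hasDerivAt_genBinom_nat_add (r : ℕ) (b : ℝ) :
    HasDerivAt (fun c => genBinom (r + c) r)
      (∑ s ∈ range r, genBinom (s + b) s / ((r : ℝ) - s)) b := by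
  induction r with
  | zero => simpa [genBinom] using hasDerivAt_const b (1 : ℝ)
  | succ r ih =>
    have hrec : ∀ s : ℕ, ((s : ℝ) + 1) * genBinom (((s + 1 : ℕ) : ℝ) + b) (s + 1)
        = (b + s + 1) * genBinom (s + b) s := fun s => by
      rw [genBinom_nat_add_succ]
      field_simp
    have hlin : HasDerivAt (fun c : ℝ => (c + r + 1) / (r + 1)) (1 / (r + 1)) b :=
      (((hasDerivAt_id' b).add_const _).add_const _).div_const _
    rw [funext (genBinom_nat_add_succ r)]
    refine (hlin.fun_mul ih).congr_deriv ?_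
    rw [sum_div_sub_succ_of_recurrence (B := fun s => genBinom (s + b) s) hrec]
    ring

lemma hasDerivAt_genBinom_add_sub {n k : ℕ} (hk : k ≤ n) (α : ℝ) :
    HasDerivAt (fun a => genBinom (n + a) (n - k))
      (∑ m ∈ Ico k n, genBinom (m + α) (m - k) / ((n : ℝ) - m)) α := by
  have h := (hasDerivAt_genBinom_nat_add (n - k) (α + k)).comp α
    ((hasDerivAt_id' α).add_const (k : ℝ))
  have hfun : (fun a => genBinom (n + a) (n - k))
      = (fun c => genBinom ((n - k : ℕ) + c) (n - k)) ∘ fun a => a + k := by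
    funext a
    simp only [Function.comp_apply, Nat.cast_sub hk, sub_add_add_cancel]
  rw [hfun]
  refine h.congr_deriv ?_
  rw [mul_one, sum_Ico_eq_sum_range]
  refine sum_congr rfl fun s _ => ?_
  simp only [Nat.add_sub_cancel_left, Nat.cast_add, Nat.cast_sub hk]
  ring_nf

theorem laguerre_parameter_derivative (n : ℕ) (α x : ℝ) :
    HasDerivAt (fun a : ℝ => laguerre n a x)
      (∑ m ∈ Finset.range n, laguerre m α x / (n - m)) α := by
  have hterm : ∀ k ∈ range (n + 1),
      HasDerivAt (fun a : ℝ => (-1 : ℝ) ^ k * genBinom (n + a) (n - k) * x ^ k / k.factorial)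
        ((-1 : ℝ) ^ k * (∑ m ∈ Ico k n, genBinom (m + α) (m - k) / ((n : ℝ) - m)) * x ^ k
          / k.factorial) α := fun k hk =>
    (((hasDerivAt_genBinom_add_sub (Nat.lt_succ_iff.mp (mem_range.mp hk)) α).const_mul _).mul_const
      _).div_const _
  refine (HasDerivAt.fun_sum hterm).congr_deriv ?_
  calc _ = ∑ k ∈ range (n + 1), ∑ m ∈ Ico k n,
          (-1 : ℝ) ^ k * genBinom (m + α) (m - k) * x ^ k / k.factorial / ((n : ℝ) - m) := by
        refine sum_congr rfl fun k _ => ?_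
        rw [mul_sum, sum_mul, sum_div]
        exact sum_congr rfl fun m _ => by ring
    _ = ∑ k ∈ Ico 0 n, ∑ m ∈ Ico k n,
          (-1 : ℝ) ^ k * genBinom (m + α) (m - k) * x ^ k / k.factorial / ((n : ℝ) - m) := by
        rw [sum_range_succ, Ico_self, sum_empty, add_zero, range_eq_Ico]
    _ = _ := by
        rw [sum_Ico_Ico_comm]
        simp only [laguerre, sum_div, range_eq_Ico]
end

section
/- If p is a function satisfying σ(x) ΔΔ̄p(x) + τ(x) Δp(x) + λ p(x) = 0 where Δf(x) = f(x+1) − f(x), ∇f(x) = f(x) − f(x−1), σ(x) = ax² + bx + c, τ(x) = dx + e, then y = Δp satisfies (ax² + bx + c) Δ∇y(x) + ((d+2a)x + (d+e+a+b)) Δy(x) + (λ + d) y(x) = 0. -/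
/-- Forward difference operator `Δf(x) = f(x+1) − f(x)`. -/
def fdiff (f : ℝ → ℝ) (x : ℝ) : ℝ := f (x + 1) - f x

/-- Backward difference operator `∇f(x) = f(x) − f(x−1)`. -/
def bdiff (f : ℝ → ℝ) (x : ℝ) : ℝ := f x - f (x - 1)

theorem difference_of_solution_satisfies_same_type (a b c d e lam : ℝ) (p : ℝ → ℝ)
    (heq : ∀ x : ℝ, (a * x ^ 2 + b * x + c) * fdiff (bdiff p) x +
      (d * x + e) * fdiff p x + lam * p x = 0) :
    ∀ x : ℝ, (a * x ^ 2 + b * x + c) * fdiff (bdiff (fdiff p)) x +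
      ((d + 2 * a) * x + (d + e + a + b)) * fdiff (fdiff p) x +
      (lam + d) * fdiff p x = 0 := by
  intro x
  have h1 := heq x
  have h2 := heq (x + 1)
  simp only [fdiff, bdiff, show x+1-1=x from by ring, show x+1+1=x+2 from by ring,
    show x+2-1=x+1 from by ring, show x-1+1=x from by ring,
    show x+1-1+1=x+1 from by ring, show x+2+(-1)=x+1 from by ring] at h1 h2 ⊢
  linear_combination h2 - h1
end

section
/- The Charlier polynomials satisfy the connection formula c_n^{(μ)}(x) = ∑_{m=0}^n (−1)^n (ν^m/μ^n) (ν−μ)^{n−m} ((−n)_m/m!) c_m^{(ν)}(x) for nonzero μ, ν. -/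
/-!
Since `(-n)_k / k! = (-1)^k C(n,k)`, we have `μ^n c_n^{(μ)}(x) = ∑_k C(n,k) μ^(n-k) (-x)_k`,
which is `L((X + μ)^n)` for the linear functional `L : X^k ↦ (-x)_k` on `ℝ[X]`. Expanding
`(X + μ)^n = ((X + ν) + (μ - ν))^n` by the binomial theorem and applying `L` gives
`μ^n c_n^{(μ)}(x) = ∑_m C(n,m) (μ - ν)^(n-m) ν^m c_m^{(ν)}(x)`, which is the connection
formula after absorbing the signs.
-/

open Finset

/-- Pochhammer symbol `(a)_k = a(a+1)⋯(a+k−1)`. -/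
noncomputable def poch (a : ℝ) (k : ℕ) : ℝ := ∏ j ∈ Finset.range k, (a + j)

/-- Charlier polynomial `c_n^{(μ)}(x) = ∑_{k=0}^n (−n)_k (−x)_k (−1/μ)^k / k!`. -/
noncomputable def charlier (n : ℕ) (μ x : ℝ) : ℝ :=
  ∑ k ∈ Finset.range (n + 1),
    poch (-(n : ℝ)) k * poch (-x) k * (-1 / μ) ^ k / (Nat.factorial k)

open Polynomial Nat

section MomentFunctional

variable {R : Type*} [CommSemiring R]

noncomputable def momentFunctional (a : ℕ → R) : R[X] →ₗ[R] R :=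
  lsum fun k => LinearMap.id.smulRight (a k)

theorem momentFunctional_monomial (a : ℕ → R) (k : ℕ) (c : R) :
    momentFunctional a (monomial k c) = c * a k := by
  simp [momentFunctional]

theorem momentFunctional_X_add_C_pow (a : ℕ → R) (s : R) (n : ℕ) :
    momentFunctional a ((X + C s) ^ n) =
      ∑ k ∈ range (n + 1), n.choose k * s ^ (n - k) * a k := by
  rw [add_pow, map_sum]
  refine sum_congr rfl fun k _ => ?_
  rw [← C_pow, ← map_natCast C, mul_assoc, ← C_mul, mul_comm, C_mul_X_pow_eq_monomial,
    momentFunctional_monomial]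
  ring

theorem momentFunctional_X_add_C_add_pow (a : ℕ → R) (s t : R) (n : ℕ) :
    momentFunctional a ((X + C (s + t)) ^ n) =
      ∑ m ∈ range (n + 1), n.choose m * t ^ (n - m) * momentFunctional a ((X + C s) ^ m) := by
  rw [C_add, ← add_assoc, add_pow, map_sum]
  refine sum_congr rfl fun m _ => ?_
  rw [← C_pow, ← map_natCast C, mul_assoc, ← C_mul, mul_comm, ← smul_eq_C_mul, map_smul,
    smul_eq_mul]
  ring

end MomentFunctional

theorem poch_eq_eval_ascPochhammer (a : ℝ) (k : ℕ) : poch a k = (ascPochhammer ℝ k).eval a := by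
  induction k with
  | zero => simp [poch]
  | succ k ih => simp [poch, prod_range_succ, ascPochhammer_succ_right, ← ih]

theorem poch_neg_natCast_div_factorial (n k : ℕ) :
    poch (-(n : ℝ)) k / k ! = (-1) ^ k * n.choose k := by
  rw [poch_eq_eval_ascPochhammer, ascPochhammer_eval_neg_eq_descPochhammer,
    descPochhammer_eval_eq_descFactorial, descFactorial_eq_factorial_mul_choose]
  push_cast
  field_simp

theorem charlier_eq_sum_choose (n : ℕ) (μ x : ℝ) :
    charlier n μ x = ∑ k ∈ range (n + 1), n.choose k * poch (-x) k / μ ^ k := by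
  refine sum_congr rfl fun k _ => ?_
  linear_combination (poch (-x) k * (-1 / μ) ^ k) * poch_neg_natCast_div_factorial n k +
    (n.choose k * poch (-x) k / μ ^ k) * pow_mul_pow_eq_one k (by norm_num : (-1 : ℝ) * -1 = 1)

theorem pow_mul_charlier (n : ℕ) {μ : ℝ} (hμ : μ ≠ 0) (x : ℝ) :
    μ ^ n * charlier n μ x = momentFunctional (poch (-x)) ((X + C μ) ^ n) := by
  rw [charlier_eq_sum_choose, momentFunctional_X_add_C_pow, mul_sum]
  refine sum_congr rfl fun k hk => ?_
  rw [← pow_sub_mul_pow μ (mem_range_succ_iff.mp hk)]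
  field_simp

theorem neg_one_pow_mul_neg_one_pow_mul_sub_pow {R : Type*} [CommRing R] {m n : ℕ} (hm : m ≤ n)
    (a b : R) : (-1) ^ n * (-1) ^ m * (b - a) ^ (n - m) = (a - b) ^ (n - m) := by
  obtain ⟨j, rfl⟩ := Nat.exists_eq_add_of_le hm
  rw [Nat.add_sub_cancel_left, ← neg_sub a b, neg_pow (a - b), ← mul_assoc, ← pow_add, ← pow_add,
    Even.neg_one_pow ⟨m + j, by ring⟩, one_mul]

theorem charlier_connection (n : ℕ) (μ ν : ℝ) (hμ : μ ≠ 0) (hν : ν ≠ 0) (x : ℝ) :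
    charlier n μ x =
      ∑ m ∈ Finset.range (n + 1),
        (-1 : ℝ) ^ n * (ν ^ m / μ ^ n) * (ν - μ) ^ (n - m) *
          (poch (-(n : ℝ)) m / (Nat.factorial m)) * charlier m ν x := by
  have hshift : μ ^ n * charlier n μ x =
      ∑ m ∈ range (n + 1), n.choose m * (μ - ν) ^ (n - m) * (ν ^ m * charlier m ν x) := by
    simp_rw [pow_mul_charlier _ hμ, pow_mul_charlier _ hν]
    rw [← momentFunctional_X_add_C_add_pow, add_sub_cancel]
  rw [← mul_right_inj' (pow_ne_zero n hμ), hshift, mul_sum]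
  refine sum_congr rfl fun m hm => ?_
  rw [poch_neg_natCast_div_factorial,
    ← neg_one_pow_mul_neg_one_pow_mul_sub_pow (mem_range_succ_iff.mp hm) μ ν]
  field_simp
end

section
/- The Krawtchouk polynomials satisfy the parameter derivative formula ∂/∂p k_n^{(p)}(x, N) = (n − N − 1) k_{n−1}^{(p)}(x, N) for n ≥ 1, where k_n^{(p)}(x, N) = (−1)^n binomial(N, n) p^n ₂F₁(−n, −x; −N; 1/p). -/
open Finset

/-- Krawtchouk polynomial
`k_n^{(p)}(x, N) = (−1)^n C(N,n) pⁿ ∑_{j=0}^n (−n)_j (−x)_j / ((−N)_j j!) · p^{−j}`. -/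
noncomputable def krawtchouk (n : ℕ) (p : ℝ) (x : ℝ) (N : ℕ) : ℝ :=
  (-1 : ℝ) ^ n * (N.choose n) * p ^ n *
    ∑ j ∈ Finset.range (n + 1),
      poch (-(n : ℝ)) j * poch (-x) j / (poch (-(N : ℝ)) j * Nat.factorial j) * (1 / p) ^ j

/-!
For `p ≠ 0`, `k_n^{(p)}` is the polynomial `∑ⱼ cⱼ p^(n-j)`, so it can be differentiated termwise.
The factor `n - j` brought down from `p^(n-j)` is absorbed by `(-n)_j (n - j) = n (-n+1)_j`, and then
`n C(N,n) = (N - n + 1) C(N,n-1)` turns each term into `n - N - 1` times the corresponding term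
of `k_{n-1}^{(p)}`.
-/

lemma poch_mul_add (a : ℝ) (j : ℕ) : poch a j * (a + j) = a * poch (a + 1) j := by
  calc poch a j * (a + j) = poch a (j + 1) := (prod_range_succ _ _).symm
    _ = a * poch (a + 1) j := by
      rw [poch, prod_range_succ', mul_comm, poch]
      simp only [Nat.cast_zero, add_zero, Nat.cast_succ, add_assoc, add_comm (1 : ℝ)]

lemma poch_neg_succ_mul (m : ℝ) (j : ℕ) :
    poch (-(m + 1)) j * (m + 1 - j) = (m + 1) * poch (-m) j := by
  have h := poch_mul_add (-(m + 1)) j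
  rw [show -(m + 1) + 1 = -m by ring] at h
  linear_combination -h

lemma cast_choose_succ_mul (N m : ℕ) :
    (N.choose (m + 1) : ℝ) * (m + 1) = N.choose m * (N - m) := by
  rcases le_or_gt m N with hm | hm
  · have h := Nat.choose_succ_right_eq N m
    rw [← Nat.cast_sub hm]
    exact_mod_cast h
  · simp [Nat.choose_eq_zero_of_lt hm, Nat.choose_eq_zero_of_lt (Nat.lt_succ_of_lt hm)]

noncomputable def krawtchoukCoeff (n : ℕ) (x : ℝ) (N j : ℕ) : ℝ :=
  (-1) ^ n * N.choose n * (poch (-(n : ℝ)) j * poch (-x) j / (poch (-(N : ℝ)) j * j.factorial))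

lemma krawtchouk_eq_sum_pow (n : ℕ) {p : ℝ} (hp : p ≠ 0) (x : ℝ) (N : ℕ) :
    krawtchouk n p x N = ∑ j ∈ range (n + 1), krawtchoukCoeff n x N j * p ^ (n - j) := by
  rw [krawtchouk, mul_sum]
  refine sum_congr rfl fun j hj => ?_
  have hpow : p ^ n = p ^ (n - j) * p ^ j := by
    rw [← pow_add, Nat.sub_add_cancel (mem_range_succ_iff.mp hj)]
  rw [krawtchoukCoeff, hpow, one_div, inv_pow]
  field_simp

lemma krawtchoukCoeff_succ_mul (m : ℕ) (x : ℝ) (N j : ℕ) :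
    krawtchoukCoeff (m + 1) x N j * (m + 1 - j) = (m - N) * krawtchoukCoeff m x N j := by
  have hpoch := poch_neg_succ_mul m j
  have hchoose := cast_choose_succ_mul N m
  rw [krawtchoukCoeff, krawtchoukCoeff, pow_succ]
  push_cast
  linear_combination (-1) ^ m * poch (-x) j / (poch (-N) j * j.factorial) *
    (-N.choose (m + 1) * hpoch - poch (-m) j * hchoose)

theorem krawtchouk_parameter_derivative_general (N n : ℕ) (hn : 1 ≤ n)
    (p : ℝ) (hp : p ≠ 0) (x : ℝ) :
    HasDerivAt (fun q : ℝ => krawtchouk n q x N)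
      (((n : ℝ) - N - 1) * krawtchouk (n - 1) p x N) p := by
  obtain ⟨m, rfl⟩ := Nat.exists_eq_add_of_le' hn
  have hsum : HasDerivAt
      (fun q => ∑ j ∈ range (m + 2), krawtchoukCoeff (m + 1) x N j * q ^ (m + 1 - j))
      (∑ j ∈ range (m + 2),
        krawtchoukCoeff (m + 1) x N j * (↑(m + 1 - j) * p ^ (m + 1 - j - 1))) p :=
    HasDerivAt.fun_sum fun j _ => (hasDerivAt_pow _ p).const_mul _
  have heq : (fun q => krawtchouk (m + 1) q x N) =ᶠ[nhds p]
      fun q => ∑ j ∈ range (m + 2), krawtchoukCoeff (m + 1) x N j * q ^ (m + 1 - j) :=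
    (eventually_ne_nhds hp).mono fun q hq => krawtchouk_eq_sum_pow _ hq x N
  refine (hsum.congr_of_eventuallyEq heq).congr_deriv ?_
  rw [sum_range_succ, Nat.sub_self, Nat.cast_zero, zero_mul, mul_zero, add_zero,
    Nat.add_sub_cancel, krawtchouk_eq_sum_pow _ hp, mul_sum]
  refine sum_congr rfl fun j hj => ?_
  have hjm : j ≤ m := mem_range_succ_iff.mp hj
  rw [Nat.cast_sub (by omega), ← mul_assoc, show m + 1 - j - 1 = m - j by omega]
  push_cast
  rw [krawtchoukCoeff_succ_mul]
  ring

theorem krawtchouk_parameter_derivative (N n : ℕ) (hN : 0 < N) (hn : 1 ≤ n) (hnN : n ≤ N)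
    (p : ℝ) (hp : p ≠ 0) (x : ℝ) :
    HasDerivAt (fun q : ℝ => krawtchouk n q x N)
      (((n : ℝ) - N - 1) * krawtchouk (n - 1) p x N) p :=
  krawtchouk_parameter_derivative_general N n hn p hp x
end
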